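/- Let μ > 0 and L² < μ, and define V(r) = (L²/r² + 1)(1 − μ/r²) for r > 0. Then V is strictly monotone increasing on (0,∞), i.e. V'(r) > 0 for all r > 0; in particular V has no critical points. -/

import Mathlib

open Real Set

noncomputable def Vpot4' (μ L : ℝ) (r : ℝ) : ℝ := (L ^ 2 / r ^ 2 + 1) * (1 - μ / r ^ 2)

theorem hasDerivAt_Vpot4' (μ L : ℝ) {r : ℝ} (hr : r ≠ 0) :
    HasDerivAt (Vpot4' μ L) (2 * (μ - L ^ 2) / r ^ 3 + 4 * L ^ 2 * μ / r ^ 5) r := by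
  have hr2 : r ^ 2 ≠ 0 := pow_ne_zero 2 hr
  have hfirst : HasDerivAt (fun x => L ^ 2 / x ^ 2 + 1) _ r :=
    ((hasDerivAt_const r (L ^ 2)).div (hasDerivAt_pow 2 r) hr2).add_const 1
  have hsecond : HasDerivAt (fun x => 1 - μ / x ^ 2) _ r :=
    ((hasDerivAt_const r μ).div (hasDerivAt_pow 2 r) hr2).const_sub 1
  refine (hfirst.mul hsecond).congr_deriv ?_
  field_simp
  ring

theorem deriv_Vpot4'_pos {μ L r : ℝ} (hL : L ^ 2 < μ) (hr : 0 < r) :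
    0 < deriv (Vpot4' μ L) r := by
  rw [(hasDerivAt_Vpot4' μ L hr.ne').deriv]
  have hμ : 0 < μ := (sq_nonneg L).trans_lt hL
  have hgap : 0 < μ - L ^ 2 := sub_pos.mpr hL
  positivity

theorem tangherlini_d4_monotone_of_small_L_general (μ L : ℝ) (hL : L ^ 2 < μ) :
    StrictMonoOn (Vpot4' μ L) (Set.Ioi 0) ∧
    ∀ r : ℝ, 0 < r → 0 < deriv (Vpot4' μ L) r := by
  have hderiv : ∀ r : ℝ, 0 < r → 0 < deriv (Vpot4' μ L) r := fun _ hr => deriv_Vpot4'_pos hL hr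
  refine ⟨strictMonoOn_of_deriv_pos (convex_Ioi 0) ?_ ?_, hderiv⟩
  · exact fun _ hr => (hasDerivAt_Vpot4' μ L (ne_of_gt hr)).continuousAt.continuousWithinAt
  · rw [interior_Ioi]
    exact hderiv

theorem tangherlini_d4_monotone_of_small_L (μ L : ℝ) (hμ : 0 < μ) (hL : L ^ 2 < μ) :
    StrictMonoOn (Vpot4' μ L) (Set.Ioi 0) ∧
    ∀ r : ℝ, 0 < r → 0 < deriv (Vpot4' μ L) r :=
  tangherlini_d4_monotone_of_small_L_general μ L hL
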